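/- For all integers n ≥ 4 and 1 ≤ s ≤ n − 2, the number of triangulations T of P_n with D(T) = s equals s · (2n−s−5)! / ( (n−s−2)! · (n−2)! ). -/

import Mathlib

open Finset
open scoped Classical

/-- `IsDiag l r i j` : the pair `{i, j}` (written with `i < j`) is a diagonal of the
convex sub-polygon on vertices `{l, …, r}`. -/
def IsDiag (l r i j : ℕ) : Prop :=
  l ≤ i ∧ i + 2 ≤ j ∧ j ≤ r ∧ ¬(i = l ∧ j = r)

/-- Two diagonals `{a, b}` and `{c, d}` (written with `a < b`, `c < d`) cross. -/
def Crosses (a b c d : ℕ) : Prop :=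
  (a < c ∧ c < b ∧ b < d) ∨ (c < a ∧ a < d ∧ d < b)

/-- All diagonals of the sub-polygon on `{l, …, r}`, as ordered pairs. -/
noncomputable def allDiags (l r : ℕ) : Finset (ℕ × ℕ) :=
  (range (r + 1) ×ˢ range (r + 1)).filter fun p => IsDiag l r p.1 p.2

/-- The triangulations of the sub-polygon on `{l, …, r}` : sets of `r - l - 2`
pairwise noncrossing diagonals. -/
noncomputable def triangulations (l r : ℕ) : Finset (Finset (ℕ × ℕ)) :=
  (allDiags l r).powerset.filter fun T =>
    T.card = r - l - 2 ∧ ∀ d ∈ T, ∀ e ∈ T, ¬ Crosses d.1 d.2 e.1 e.2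

/-- `IsEdge l r i j` : the pair `{i, j}` (with `i < j`) is an edge (boundary side) of the
sub-polygon on `{l, …, r}`. -/
def IsEdge (l r i j : ℕ) : Prop :=
  (l ≤ i ∧ j = i + 1 ∧ j ≤ r) ∨ (i = l ∧ j = r)

/-- `{i, j}` is a side available in the triangulation `T` (an edge of the polygon or a
diagonal of `T`). -/
def IsSide (l r : ℕ) (T : Finset (ℕ × ℕ)) (i j : ℕ) : Prop :=
  IsEdge l r i j ∨ (i, j) ∈ T

/-- The triangles of a triangulation `T` of the sub-polygon on `{l, …, r}`, as ordered
triples `(a, b, c)` with `a < b < c`, each of whose three sides is an edge or a diagonal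
of `T`. -/
noncomputable def triangles (l r : ℕ) (T : Finset (ℕ × ℕ)) : Finset (ℕ × ℕ × ℕ) :=
  (range (r + 1) ×ˢ range (r + 1) ×ˢ range (r + 1)).filter fun t =>
    t.1 < t.2.1 ∧ t.2.1 < t.2.2 ∧
      IsSide l r T t.1 t.2.1 ∧ IsSide l r T t.2.1 t.2.2 ∧ IsSide l r T t.1 t.2.2

/-- The number of sides of the triangle `{a, b, c}` (with `a < b < c`) that are edges of
the sub-polygon on `{l, …, r}`. -/
noncomputable def edgeCount (l r a b c : ℕ) : ℕ :=
  (if IsEdge l r a b then 1 else 0) + (if IsEdge l r b c then 1 else 0) +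
    (if IsEdge l r a c then 1 else 0)

/-- `O(T)` : the number of triangles of `T` with exactly one side an edge of `P_n`. -/
noncomputable def oneSideCount (n : ℕ) (T : Finset (ℕ × ℕ)) : ℕ :=
  ((triangles 1 n T).filter fun t => edgeCount 1 n t.1 t.2.1 t.2.2 = 1).card

/-- `Ear(T)` : the number of triangles of `T` with at least two sides edges of `P_n`. -/
noncomputable def earCount (n : ℕ) (T : Finset (ℕ × ℕ)) : ℕ :=
  ((triangles 1 n T).filter fun t => 2 ≤ edgeCount 1 n t.1 t.2.1 t.2.2).card

/-- `D(T)` : the number of triangles of `T` containing vertex `1`. -/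
noncomputable def degOne (n : ℕ) (T : Finset (ℕ × ℕ)) : ℕ :=
  ((triangles 1 n T).filter fun t => t.1 = 1 ∨ t.2.1 = 1 ∨ t.2.2 = 1).card

/-- `B(T)` : the number of triangles `{l, j, r}` of `T` (with `l < j < r`) such that
`j - l = 1`. -/
noncomputable def blueCount (n : ℕ) (T : Finset (ℕ × ℕ)) : ℕ :=
  ((triangles 1 n T).filter fun t => t.2.1 - t.1 = 1).card

/-- `A_i(T)` : the number of triangles `{1, a, b}` of `T` containing vertex `1`
(written with `1 < a < b`) such that `b - a = i`. -/
noncomputable def angleCount (n : ℕ) (T : Finset (ℕ × ℕ)) (i : ℕ) : ℕ :=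
  ((triangles 1 n T).filter fun t => t.1 = 1 ∧ t.2.2 - t.2.1 = i).card

/-!
In a triangulation `T` of `P_n` let `{1, j, n}` be the triangle on the side `{1, n}`. It cuts `T`
into a triangulation of the polygon on `{1, …, j}` and one of the polygon on `{j, …, n}`, and the
triangles of `T` at vertex `1` are `{1, j, n}` together with those of the first part. Hence the
number `N(n, s)` of triangulations with `D(T) = s` satisfies
`N(n, s) = ∑_{j = 2}^{n - 1} N(j, s - 1) C_{n - j - 1}`. The ballot numbers
`b(k, s) = s (2k - s - 1)! / ((k - s)! k!)` satisfy the same recursion in `k = n - 2`, as follows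
from their Pascal-type rule `b(k + 1, s + 1) = b(k + 1, s + 2) + b(k, s)`.

Since triangulations are defined by their size, the decomposition also needs that a noncrossing
set of diagonals of a convex `m`-gon has at most `m - 3` elements.
-/

lemma mem_allDiags {l r : ℕ} {p : ℕ × ℕ} : p ∈ allDiags l r ↔ IsDiag l r p.1 p.2 := by
  simp only [allDiags, mem_filter, mem_product, mem_range, and_iff_right_iff_imp]
  rintro ⟨-, h2, h3, -⟩
  omega

lemma mem_triangulations {l r : ℕ} {T : Finset (ℕ × ℕ)} :
    T ∈ triangulations l r ↔
      (∀ p ∈ T, IsDiag l r p.1 p.2) ∧ T.card = r - l - 2 ∧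
        ∀ p ∈ T, ∀ q ∈ T, ¬ Crosses p.1 p.2 q.1 q.2 := by
  simp only [triangulations, mem_filter, mem_powerset, subset_iff, mem_allDiags]

lemma mem_triangles {l r : ℕ} {T : Finset (ℕ × ℕ)} {t : ℕ × ℕ × ℕ} :
    t ∈ triangles l r T ↔
      t.2.2 ≤ r ∧ t.1 < t.2.1 ∧ t.2.1 < t.2.2 ∧
        IsSide l r T t.1 t.2.1 ∧ IsSide l r T t.2.1 t.2.2 ∧ IsSide l r T t.1 t.2.2 := by
  simp only [triangles, mem_filter, mem_product, mem_range]
  constructor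
  · rintro ⟨⟨-, -, h⟩, h'⟩
    exact ⟨by omega, h'⟩
  · rintro ⟨h, h1, h2, h'⟩
    exact ⟨⟨by omega, by omega, by omega⟩, h1, h2, h'⟩

lemma triangulations_of_le {l r : ℕ} (h : r ≤ l + 2) : triangulations l r = {∅} := by
  ext T
  rw [mem_triangulations, mem_singleton]
  constructor
  · rintro ⟨hd, -, -⟩
    exact eq_empty_of_forall_notMem fun p hp => by have := hd p hp; unfold IsDiag at this; omega
  · rintro rfl
    refine ⟨by simp, ?_, by simp⟩
    rw [card_empty]
    omega

/-- Every vertex of a triangle is at least `1`, so vertex `1` can only be the smallest one. -/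
lemma degOne_eq_card_filter {n : ℕ} {T : Finset (ℕ × ℕ)} (hT : ∀ p ∈ T, IsDiag 1 n p.1 p.2) :
    degOne n T = ((triangles 1 n T).filter fun t => t.1 = 1).card := by
  unfold degOne
  congr 1
  refine filter_congr fun t ht => ?_
  obtain ⟨-, hab, hbc, sab, -, -⟩ := mem_triangles.mp ht
  have : 1 ≤ t.1 := by
    rcases sab with (⟨a, -, -⟩ | ⟨a, -⟩) | h
    · exact a
    · omega
    · exact (hT _ h).1
  omega

/-- `p = (a, b)` is a diagonal of the convex polygon whose vertices are the elements of `V`,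
in increasing order. -/
def IsPolygonDiag (V : Finset ℕ) (p : ℕ × ℕ) : Prop :=
  p.1 ∈ V ∧ p.2 ∈ V ∧ (∃ v ∈ V, p.1 < v ∧ v < p.2) ∧ ∃ w ∈ V, w < p.1 ∨ p.2 < w

lemma four_le_card_of_lt {V : Finset ℕ} {a b c d : ℕ} (ha : a ∈ V) (hb : b ∈ V) (hc : c ∈ V)
    (hd : d ∈ V) (hab : a < b) (hbc : b < c) (hcd : c < d) : 4 ≤ V.card := by
  have hsub : ({a, b, c, d} : Finset ℕ) ⊆ V := by
    simp only [insert_subset_iff, singleton_subset_iff]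
    exact ⟨ha, hb, hc, hd⟩
  refine le_trans (le_of_eq ?_) (card_le_card hsub)
  rw [card_insert_of_notMem (by simp only [mem_insert, mem_singleton]; omega),
    card_insert_of_notMem (by simp only [mem_insert, mem_singleton]; omega), card_pair (by omega)]

lemma IsPolygonDiag.cut {V : Finset ℕ} {a b : ℕ} {q : ℕ × ℕ} (hq : IsPolygonDiag V q)
    (ha : a ∈ V) (hb : b ∈ V) (hab : a < b) (hqab : q ≠ (a, b))
    (h1 : q.1 ≤ a ∨ b ≤ q.1) (h2 : q.2 ≤ a ∨ b ≤ q.2) :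
    IsPolygonDiag (V.filter fun v => ¬(a < v ∧ v < b)) q := by
  obtain ⟨hq1, hq2, ⟨v, hv, hv1, hv2⟩, ⟨w, hw, hw'⟩⟩ := hq
  have ha' : a ∈ V.filter fun v => ¬(a < v ∧ v < b) := mem_filter.mpr ⟨ha, by omega⟩
  have hb' : b ∈ V.filter fun v => ¬(a < v ∧ v < b) := mem_filter.mpr ⟨hb, by omega⟩
  have hq' : q.1 ≠ a ∨ q.2 ≠ b := by
    by_contra! h
    exact hqab (Prod.ext h.1 h.2)
  refine ⟨mem_filter.mpr ⟨hq1, by omega⟩, mem_filter.mpr ⟨hq2, by omega⟩, ?_, ?_⟩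
  · by_cases hvab : a < v ∧ v < b
    · rcases Nat.lt_or_ge b q.2 with h | h
      · exact ⟨b, hb', by omega⟩
      · exact ⟨a, ha', by omega⟩
    · exact ⟨v, mem_filter.mpr ⟨hv, hvab⟩, hv1, hv2⟩
  · by_cases hwab : a < w ∧ w < b
    · rcases hw' with h | h
      · exact ⟨a, ha', by omega⟩
      · exact ⟨b, hb', by omega⟩
    · exact ⟨w, mem_filter.mpr ⟨hw, hwab⟩, hw'⟩

/-- A shortest diagonal `(a, b)` of a noncrossing family has no other endpoint strictly between
`a` and `b`; cutting off those (at least one) vertices and inducting gives the bound. -/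
theorem card_add_three_le_of_noncrossing {S : Finset (ℕ × ℕ)} {V : Finset ℕ}
    (hne : S.Nonempty) (hS : ∀ p ∈ S, IsPolygonDiag V p)
    (hnc : ∀ p ∈ S, ∀ q ∈ S, ¬ Crosses p.1 p.2 q.1 q.2) : S.card + 3 ≤ V.card := by
  induction S using Finset.strongInduction generalizing V with
  | H S ih =>
  obtain ⟨p, hp, hmin⟩ := S.exists_min_image (fun q => q.2 - q.1) hne
  obtain ⟨ha, hb, ⟨v, hv, hav, hvb⟩, ⟨w, hw, hw'⟩⟩ := hS p hp
  have hsep : ∀ q ∈ S, q ≠ p → (q.1 ≤ p.1 ∨ p.2 ≤ q.1) ∧ (q.2 ≤ p.1 ∨ p.2 ≤ q.2) := by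
    intro q hq hqp
    have hpq := hnc p hp q hq
    have hqp' := hnc q hq p hp
    have hlen := hmin q hq
    obtain ⟨-, -, ⟨u, -, hu1, hu2⟩, -⟩ := hS q hq
    have : q.1 ≠ p.1 ∨ q.2 ≠ p.2 := by
      by_contra! h
      exact hqp (Prod.ext h.1 h.2)
    unfold Crosses at hpq hqp'
    omega
  have hcut : (V.filter fun u => ¬(p.1 < u ∧ u < p.2)).card < V.card :=
    card_lt_card ⟨filter_subset _ _, fun h => (mem_filter.mp (h hv)).2 ⟨hav, hvb⟩⟩
  rcases (S.erase p).eq_empty_or_nonempty with he | hne'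
  · have : S.card = 1 := by rw [← insert_erase hp, he]; rfl
    rw [this]
    rcases hw' with h | h
    · exact four_le_card_of_lt hw ha hv hb h hav hvb
    · exact four_le_card_of_lt ha hv hb hw hav hvb h
  · have hS' : ∀ q ∈ S.erase p, IsPolygonDiag (V.filter fun u => ¬(p.1 < u ∧ u < p.2)) q := by
      intro q hq
      obtain ⟨hqp, hq⟩ := mem_erase.mp hq
      exact (hS q hq).cut ha hb (by omega) hqp (hsep q hq hqp).1 (hsep q hq hqp).2
    have := ih (S.erase p) (erase_ssubset hp) hne' hS'
      (fun q hq q' hq' => hnc q (mem_of_mem_erase hq) q' (mem_of_mem_erase hq'))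
    rw [card_erase_of_mem hp] at this
    have := card_pos.mpr hne
    omega

theorem card_le_of_noncrossing {l r : ℕ} {S : Finset (ℕ × ℕ)}
    (hS : ∀ p ∈ S, IsDiag l r p.1 p.2) (hnc : ∀ p ∈ S, ∀ q ∈ S, ¬ Crosses p.1 p.2 q.1 q.2) :
    S.card ≤ r - l - 2 := by
  rcases S.eq_empty_or_nonempty with rfl | hne
  · simp
  have hV : ∀ p ∈ S, IsPolygonDiag (Icc l r) p := by
    intro p hp
    obtain ⟨h1, h2, h3, h4⟩ := hS p hp
    refine ⟨mem_Icc.mpr ⟨h1, by omega⟩, mem_Icc.mpr ⟨by omega, h3⟩,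
      ⟨p.1 + 1, mem_Icc.mpr ⟨by omega, by omega⟩, by omega⟩, ?_⟩
    rcases Nat.lt_or_ge l p.1 with h | h
    · exact ⟨l, mem_Icc.mpr ⟨le_rfl, by omega⟩, by omega⟩
    · exact ⟨r, mem_Icc.mpr ⟨by omega, le_rfl⟩, by omega⟩
  have := card_add_three_le_of_noncrossing hne hV hnc
  rw [Nat.card_Icc] at this
  omega

section Glue

variable {n j : ℕ} {T1 T2 : Finset (ℕ × ℕ)}

/-- The sides `{1, j}` and `{j, n}` of the triangle `{1, j, n}` that are diagonals of `P_n`. -/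
noncomputable def cornerDiags (j n : ℕ) : Finset (ℕ × ℕ) :=
  (if 3 ≤ j then {(1, j)} else ∅) ∪ (if j + 2 ≤ n then {(j, n)} else ∅)

lemma mem_cornerDiags {p : ℕ × ℕ} :
    p ∈ cornerDiags j n ↔ (3 ≤ j ∧ p = (1, j)) ∨ (j + 2 ≤ n ∧ p = (j, n)) := by
  unfold cornerDiags
  split_ifs <;> simp [*]

lemma card_cornerDiags :
    (cornerDiags j n).card = (if 3 ≤ j then 1 else 0) + (if j + 2 ≤ n then 1 else 0) := by
  unfold cornerDiags
  split_ifs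
  · rw [singleton_union, card_pair (by simp only [ne_eq, Prod.mk.injEq, not_and]; omega)]
  all_goals simp

/-- The triangulation of `P_n` with triangle `{1, j, n}` whose restrictions to `{1, …, j}` and
`{j, …, n}` are `T1` and `T2`. -/
noncomputable def glue (j n : ℕ) (T1 T2 : Finset (ℕ × ℕ)) : Finset (ℕ × ℕ) :=
  T1 ∪ T2 ∪ cornerDiags j n

lemma mem_glue_cases (h1 : ∀ p ∈ T1, IsDiag 1 j p.1 p.2) (h2 : ∀ p ∈ T2, IsDiag j n p.1 p.2)
    {p : ℕ × ℕ} (hp : p ∈ glue j n T1 T2) :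
    (3 ≤ j ∧ p.1 = 1 ∧ p.2 = j) ∨ (j + 2 ≤ n ∧ p.1 = j ∧ p.2 = n) ∨
      (p ∈ T1 ∧ 1 ≤ p.1 ∧ p.1 + 2 ≤ p.2 ∧ p.2 ≤ j) ∨
      (p ∈ T2 ∧ j ≤ p.1 ∧ p.1 + 2 ≤ p.2 ∧ p.2 ≤ n) := by
  simp only [glue, mem_union, mem_cornerDiags] at hp
  rcases hp with (hp | hp) | ⟨hj, rfl⟩ | ⟨hj, rfl⟩
  · obtain ⟨a, b, c, -⟩ := h1 p hp
    exact Or.inr (Or.inr (Or.inl ⟨hp, a, b, c⟩))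
  · obtain ⟨a, b, c, -⟩ := h2 p hp
    exact Or.inr (Or.inr (Or.inr ⟨hp, a, b, c⟩))
  · exact Or.inl ⟨hj, rfl, rfl⟩
  · exact Or.inr (Or.inl ⟨hj, rfl, rfl⟩)

lemma isDiag_of_mem_glue (hj : 2 ≤ j) (hjn : j < n) (h1 : ∀ p ∈ T1, IsDiag 1 j p.1 p.2)
    (h2 : ∀ p ∈ T2, IsDiag j n p.1 p.2) {p : ℕ × ℕ} (hp : p ∈ glue j n T1 T2) :
    IsDiag 1 n p.1 p.2 := by
  unfold IsDiag
  rcases mem_glue_cases h1 h2 hp with h | h | h | h <;> omega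

lemma card_glue (h1 : ∀ p ∈ T1, IsDiag 1 j p.1 p.2)
    (h2 : ∀ p ∈ T2, IsDiag j n p.1 p.2) :
    (glue j n T1 T2).card = T1.card + T2.card + (cornerDiags j n).card := by
  have hdisj : Disjoint T1 T2 := disjoint_left.mpr fun p hp1 hp2 => by
    have := h1 p hp1; have := h2 p hp2; unfold IsDiag at *; omega
  have hdisj' : Disjoint (T1 ∪ T2) (cornerDiags j n) := disjoint_left.mpr fun p hp hpc => by
    rw [mem_cornerDiags] at hpc
    rcases mem_union.mp hp with hp | hp
    · have := h1 p hp; unfold IsDiag at this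
      rcases hpc with ⟨-, rfl⟩ | ⟨-, rfl⟩ <;> dsimp only at this <;> omega
    · have := h2 p hp; unfold IsDiag at this
      rcases hpc with ⟨-, rfl⟩ | ⟨-, rfl⟩ <;> dsimp only at this <;> omega
  rw [glue, card_union_of_disjoint hdisj', card_union_of_disjoint hdisj]

theorem glue_mem_triangulations (hj : 2 ≤ j) (hjn : j < n) (h1 : T1 ∈ triangulations 1 j)
    (h2 : T2 ∈ triangulations j n) : glue j n T1 T2 ∈ triangulations 1 n := by
  obtain ⟨h1d, h1c, h1nc⟩ := mem_triangulations.mp h1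
  obtain ⟨h2d, h2c, h2nc⟩ := mem_triangulations.mp h2
  refine mem_triangulations.mpr ⟨fun p hp => isDiag_of_mem_glue hj hjn h1d h2d hp, ?_, ?_⟩
  · rw [card_glue h1d h2d, h1c, h2c, card_cornerDiags]
    split_ifs <;> omega
  · intro p hp q hq
    rcases mem_glue_cases h1d h2d hp with hP | hP | hP | hP <;>
      rcases mem_glue_cases h1d h2d hq with hQ | hQ | hQ | hQ <;>
      first
        | exact h1nc p hP.1 q hQ.1
        | exact h2nc p hP.1 q hQ.1
        | (unfold Crosses; omega)

lemma isSide_glue_of_isSide (hj : 2 ≤ j) (hjn : j < n) {x y : ℕ} (h : IsSide 1 j T1 x y) :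
    IsSide 1 n (glue j n T1 T2) x y := by
  rcases h with (⟨a, b, c⟩ | ⟨rfl, hy⟩) | h
  · exact Or.inl (Or.inl ⟨a, b, by omega⟩)
  · rw [hy]
    by_cases hj3 : 3 ≤ j
    · exact Or.inr (mem_union_right _ (mem_cornerDiags.mpr (Or.inl ⟨hj3, rfl⟩)))
    · exact Or.inl (Or.inl ⟨le_rfl, by omega, by omega⟩)
  · exact Or.inr (mem_union_left _ (mem_union_left _ h))

lemma isSide_of_isSide_glue (hjn : j < n) (h1 : ∀ p ∈ T1, IsDiag 1 j p.1 p.2)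
    (h2 : ∀ p ∈ T2, IsDiag j n p.1 p.2) {x y : ℕ} (h : IsSide 1 n (glue j n T1 T2) x y)
    (hx : 1 ≤ x) (hyj : y ≤ j) : IsSide 1 j T1 x y := by
  rcases h with (⟨a, b, c⟩ | ⟨rfl, rfl⟩) | h
  · exact Or.inl (Or.inl ⟨a, b, hyj⟩)
  · omega
  · rcases mem_glue_cases h1 h2 h with hP | hP | hP | hP
    · exact Or.inl (Or.inr ⟨hP.2.1, hP.2.2⟩)
    · omega
    · exact Or.inr hP.1
    · omega

lemma le_or_le_of_isSide_glue (h1 : ∀ p ∈ T1, IsDiag 1 j p.1 p.2)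
    (h2 : ∀ p ∈ T2, IsDiag j n p.1 p.2) {x y : ℕ} (h : IsSide 1 n (glue j n T1 T2) x y) :
    y ≤ j ∨ j ≤ x ∨ (x = 1 ∧ y = n) := by
  rcases h with (⟨a, b, c⟩ | ⟨a, b⟩) | h
  · omega
  · omega
  · rcases mem_glue_cases h1 h2 h with hP | hP | hP | hP <;> omega

lemma isSide_glue_one_self (hj : 2 ≤ j) (hjn : j < n) : IsSide 1 n (glue j n T1 T2) 1 j :=
  isSide_glue_of_isSide hj hjn (Or.inl (Or.inr ⟨rfl, rfl⟩))

lemma mem_triangles_glue (hj : 2 ≤ j) (hjn : j < n) :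
    (1, j, n) ∈ triangles 1 n (glue j n T1 T2) := by
  rw [mem_triangles]
  dsimp only
  refine ⟨le_rfl, by omega, hjn, isSide_glue_one_self hj hjn, ?_,
    Or.inl (Or.inr ⟨rfl, rfl⟩)⟩
  by_cases hjn' : j + 2 ≤ n
  · exact Or.inr (mem_union_right _ (mem_cornerDiags.mpr (Or.inr ⟨hjn', rfl⟩)))
  · exact Or.inl (Or.inl ⟨by omega, by omega, le_rfl⟩)

lemma filter_triangles_glue (hj : 2 ≤ j) (hjn : j < n) (h1 : ∀ p ∈ T1, IsDiag 1 j p.1 p.2)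
    (h2 : ∀ p ∈ T2, IsDiag j n p.1 p.2) :
    (triangles 1 n (glue j n T1 T2)).filter (fun t => t.1 = 1) =
      insert (1, j, n) ((triangles 1 j T1).filter fun t => t.1 = 1) := by
  ext ⟨a, b, c⟩
  simp only [mem_filter, mem_insert, mem_triangles, Prod.mk.injEq]
  constructor
  · rintro ⟨⟨hc, hab, hbc, sab, sbc, sac⟩, rfl⟩
    have hb := le_or_le_of_isSide_glue h1 h2 sab
    have hcn := le_or_le_of_isSide_glue h1 h2 sbc
    have hc' := le_or_le_of_isSide_glue h1 h2 sac
    by_cases hcn' : c = n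
    · left; omega
    · right
      have hcj : c ≤ j := by omega
      exact ⟨⟨hcj, hab, hbc, isSide_of_isSide_glue hjn h1 h2 sab le_rfl (by omega),
        isSide_of_isSide_glue hjn h1 h2 sbc (by omega) hcj,
        isSide_of_isSide_glue hjn h1 h2 sac le_rfl hcj⟩, rfl⟩
  · rintro (⟨rfl, rfl, rfl⟩ | ⟨⟨hc, hab, hbc, sab, sbc, sac⟩, rfl⟩)
    · exact ⟨mem_triangles.mp (mem_triangles_glue hj hjn), rfl⟩
    · exact ⟨⟨by omega, hab, hbc, isSide_glue_of_isSide hj hjn sab,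
        isSide_glue_of_isSide hj hjn sbc, isSide_glue_of_isSide hj hjn sac⟩, rfl⟩

theorem degOne_glue (hj : 2 ≤ j) (hjn : j < n) (h1 : ∀ p ∈ T1, IsDiag 1 j p.1 p.2)
    (h2 : ∀ p ∈ T2, IsDiag j n p.1 p.2) : degOne n (glue j n T1 T2) = degOne j T1 + 1 := by
  rw [degOne_eq_card_filter (fun p hp => isDiag_of_mem_glue hj hjn h1 h2 hp),
    degOne_eq_card_filter h1, filter_triangles_glue hj hjn h1 h2, card_insert_of_notMem]
  intro h
  have := (mem_triangles.mp (mem_filter.mp h).1).1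
  dsimp only at this
  omega

lemma filter_glue_left (h1 : ∀ p ∈ T1, IsDiag 1 j p.1 p.2)
    (h2 : ∀ p ∈ T2, IsDiag j n p.1 p.2) :
    (glue j n T1 T2).filter (fun p => IsDiag 1 j p.1 p.2) = T1 := by
  ext p
  rw [mem_filter]
  refine ⟨fun ⟨hp, hd⟩ => ?_, fun hp => ⟨mem_union_left _ (mem_union_left _ hp), h1 p hp⟩⟩
  unfold IsDiag at hd
  rcases mem_glue_cases h1 h2 hp with hP | hP | hP | hP
  · omega
  · omega
  · exact hP.1
  · omega

lemma filter_glue_right (h1 : ∀ p ∈ T1, IsDiag 1 j p.1 p.2)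
    (h2 : ∀ p ∈ T2, IsDiag j n p.1 p.2) :
    (glue j n T1 T2).filter (fun p => IsDiag j n p.1 p.2) = T2 := by
  ext p
  rw [mem_filter]
  refine ⟨fun ⟨hp, hd⟩ => ?_, fun hp => ⟨mem_union_left _ (mem_union_right _ hp), h2 p hp⟩⟩
  unfold IsDiag at hd
  rcases mem_glue_cases h1 h2 hp with hP | hP | hP | hP
  · omega
  · omega
  · omega
  · exact hP.1

lemma glue_inj {j' : ℕ} {T1' T2' : Finset (ℕ × ℕ)} (hj : 2 ≤ j) (hjn : j < n)
    (hj' : 2 ≤ j') (hjn' : j' < n)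
    (h1 : ∀ p ∈ T1, IsDiag 1 j p.1 p.2) (h2 : ∀ p ∈ T2, IsDiag j n p.1 p.2)
    (h1' : ∀ p ∈ T1', IsDiag 1 j' p.1 p.2) (h2' : ∀ p ∈ T2', IsDiag j' n p.1 p.2)
    (h : glue j n T1 T2 = glue j' n T1' T2') : j = j' ∧ T1 = T1' ∧ T2 = T2' := by
  have hle := le_or_le_of_isSide_glue h1 h2 (h ▸ isSide_glue_one_self hj' hjn')
  have hge := le_or_le_of_isSide_glue h1' h2' (h ▸ isSide_glue_one_self hj hjn)
  obtain rfl : j = j' := by omega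
  refine ⟨rfl, ?_, ?_⟩
  · rw [← filter_glue_left h1 h2, h, filter_glue_left h1' h2']
  · rw [← filter_glue_right h1 h2, h, filter_glue_right h1' h2']

end Glue

section Decomposition

variable {n j : ℕ} {T : Finset (ℕ × ℕ)}

lemma exists_last_isSide_one (hn : 3 ≤ n) :
    ∃ j, 2 ≤ j ∧ j < n ∧ IsSide 1 n T 1 j ∧ ∀ k, j < k → k < n → ¬ IsSide 1 n T 1 k := by
  have h2 : 2 ∈ (Ico 2 n).filter (IsSide 1 n T 1) :=
    mem_filter.mpr ⟨mem_Ico.mpr ⟨le_rfl, by omega⟩, Or.inl (Or.inl ⟨le_rfl, rfl, by omega⟩)⟩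
  obtain ⟨j, hj, hmax⟩ := exists_max_image _ id ⟨2, h2⟩
  obtain ⟨hj, hside⟩ := mem_filter.mp hj
  rw [mem_Ico] at hj
  refine ⟨j, hj.1, hj.2, hside, fun k hjk hkn hk => ?_⟩
  exact Nat.not_le.mpr hjk (hmax k (mem_filter.mpr ⟨mem_Ico.mpr ⟨by omega, hkn⟩, hk⟩))

/-- No diagonal `(a, b)` of `T` has `a < j < b`: with `a = 1` it would be a later side at `1`,
and with `a > 1` it would cross the diagonal `(1, j)`. -/
lemma le_or_le_of_last_isSide_one (hT : T ∈ triangulations 1 n)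
    (hside : IsSide 1 n T 1 j) (hlast : ∀ k, j < k → k < n → ¬ IsSide 1 n T 1 k)
    {p : ℕ × ℕ} (hp : p ∈ T) : p.2 ≤ j ∨ j ≤ p.1 := by
  obtain ⟨hd, -, hnc⟩ := mem_triangulations.mp hT
  obtain ⟨a, b, c, d⟩ := hd p hp
  by_contra! hpj
  rcases Nat.eq_or_lt_of_le a with ha | ha
  · refine hlast p.2 hpj.1 (by omega) (Or.inr ?_)
    rwa [ha]
  · have h1j : (1, j) ∈ T := by
      rcases hside with (⟨-, h, -⟩ | ⟨-, h⟩) | h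
      · omega
      · omega
      · exact h
    exact hnc _ h1j p hp (Or.inl ⟨ha, hpj.2, hpj.1⟩)

/-- Otherwise `(j, n)` could be added to `T` without crossing, exceeding the maximal number
`n - 3` of noncrossing diagonals. -/
lemma mem_of_last_isSide_one (hT : T ∈ triangulations 1 n) (hj : 2 ≤ j) (hjn : j + 2 ≤ n)
    (hside : IsSide 1 n T 1 j) (hlast : ∀ k, j < k → k < n → ¬ IsSide 1 n T 1 k) :
    (j, n) ∈ T := by
  obtain ⟨hd, hc, hnc⟩ := mem_triangulations.mp hT
  have hsep := fun p (hp : p ∈ T) => le_or_le_of_last_isSide_one hT hside hlast hp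
  by_contra hjT
  have hd' : ∀ p ∈ insert (j, n) T, IsDiag 1 n p.1 p.2 := by
    intro p hp
    rcases mem_insert.mp hp with rfl | hp
    · exact ⟨by omega, hjn, le_rfl, by omega⟩
    · exact hd p hp
  have hnc' : ∀ p ∈ insert (j, n) T, ∀ q ∈ insert (j, n) T, ¬ Crosses p.1 p.2 q.1 q.2 := by
    intro p hp q hq
    rcases mem_insert.mp hp with rfl | hp <;> rcases mem_insert.mp hq with rfl | hq
    · unfold Crosses; omega
    · have := hsep q hq; have := hd q hq; unfold IsDiag at this; unfold Crosses; omega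
    · have := hsep p hp; have := hd p hp; unfold IsDiag at this; unfold Crosses; omega
    · exact hnc p hp q hq
  have := card_le_of_noncrossing hd' hnc'
  rw [card_insert_of_notMem hjT, hc] at this
  omega

theorem exists_eq_glue (hn : 3 ≤ n) (hT : T ∈ triangulations 1 n) :
    ∃ j ∈ Ico 2 n, ∃ T1 ∈ triangulations 1 j, ∃ T2 ∈ triangulations j n,
      T = glue j n T1 T2 := by
  obtain ⟨hd, hc, hnc⟩ := mem_triangulations.mp hT
  obtain ⟨j, hj, hjn, hside, hlast⟩ := exists_last_isSide_one (T := T) hn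
  set T1 := T.filter fun p => IsDiag 1 j p.1 p.2
  set T2 := T.filter fun p => IsDiag j n p.1 p.2
  have h1 : ∀ p ∈ T1, IsDiag 1 j p.1 p.2 := fun p hp => (mem_filter.mp hp).2
  have h2 : ∀ p ∈ T2, IsDiag j n p.1 p.2 := fun p hp => (mem_filter.mp hp).2
  have hcorner : cornerDiags j n ⊆ T := by
    intro p hp
    rcases mem_cornerDiags.mp hp with ⟨hj3, rfl⟩ | ⟨hjn', rfl⟩
    · rcases hside with (⟨-, h, -⟩ | ⟨-, h⟩) | h
      · omega
      · omega
      · exact h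
    · exact mem_of_last_isSide_one hT hj hjn' hside hlast
  have hTeq : T = glue j n T1 T2 := by
    refine Subset.antisymm (fun p hp => ?_)
      (union_subset (union_subset (filter_subset _ _) (filter_subset _ _)) hcorner)
    simp only [glue, mem_union, mem_cornerDiags, T1, T2, mem_filter, hp, true_and, Prod.ext_iff]
    have := hd p hp
    have := le_or_le_of_last_isSide_one hT hside hlast hp
    unfold IsDiag at *
    omega
  have hnc' : ∀ S ⊆ T, ∀ p ∈ S, ∀ q ∈ S, ¬ Crosses p.1 p.2 q.1 q.2 :=
    fun S hS p hp q hq => hnc p (hS hp) q (hS hq)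
  have hle1 := card_le_of_noncrossing h1 (hnc' T1 (filter_subset _ _))
  have hle2 := card_le_of_noncrossing h2 (hnc' T2 (filter_subset _ _))
  have hsum := card_glue h1 h2 (T1 := T1) (T2 := T2)
  rw [← hTeq, hc, card_cornerDiags] at hsum
  refine ⟨j, mem_Ico.mpr ⟨hj, hjn⟩, T1, ?_, T2, ?_, hTeq⟩
  · refine mem_triangulations.mpr ⟨h1, ?_, hnc' T1 (filter_subset _ _)⟩
    split_ifs at hsum <;> omega
  · refine mem_triangulations.mpr ⟨h2, ?_, hnc' T2 (filter_subset _ _)⟩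
    split_ifs at hsum <;> omega

end Decomposition

theorem card_filter_triangulations_eq_sum {n : ℕ} (hn : 3 ≤ n) (P : ℕ → Prop)
    [DecidablePred P] :
    ((triangulations 1 n).filter fun T => P (degOne n T)).card =
      ∑ j ∈ Ico 2 n, ((triangulations 1 j).filter fun T => P (degOne j T + 1)).card *
        (triangulations j n).card := by
  simp only [← card_product]
  rw [← card_sigma]
  symm
  refine card_bij (fun x _ => glue x.1 n x.2.1 x.2.2) ?_ ?_ ?_
  · rintro ⟨j, T1, T2⟩ hx
    simp only [mem_sigma, mem_Ico, mem_product, mem_filter] at hx ⊢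
    obtain ⟨⟨hj, hjn⟩, ⟨h1, hP⟩, h2⟩ := hx
    rw [degOne_glue hj hjn (mem_triangulations.mp h1).1 (mem_triangulations.mp h2).1]
    exact ⟨glue_mem_triangulations hj hjn h1 h2, hP⟩
  · rintro ⟨j, T1, T2⟩ hx ⟨j', T1', T2'⟩ hx' h
    simp only [mem_sigma, mem_Ico, mem_product, mem_filter] at hx hx'
    obtain ⟨rfl, rfl, rfl⟩ := glue_inj hx.1.1 hx.1.2 hx'.1.1 hx'.1.2
      (mem_triangulations.mp hx.2.1.1).1 (mem_triangulations.mp hx.2.2).1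
      (mem_triangulations.mp hx'.2.1.1).1 (mem_triangulations.mp hx'.2.2).1 h
    rfl
  · intro T hT
    obtain ⟨hT, hP⟩ := mem_filter.mp hT
    obtain ⟨j, hj, T1, h1, T2, h2, rfl⟩ := exists_eq_glue hn hT
    have hj' := mem_Ico.mp hj
    rw [degOne_glue hj'.1 hj'.2 (mem_triangulations.mp h1).1 (mem_triangulations.mp h2).1] at hP
    exact ⟨⟨j, T1, T2⟩, mem_sigma.mpr ⟨hj, mem_product.mpr ⟨mem_filter.mpr ⟨h1, hP⟩, h2⟩⟩, rfl⟩

lemma map_shift_mem_triangulations {l r d : ℕ} {T : Finset (ℕ × ℕ)} :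
    T.map ((addRightEmbedding d).prodMap (addRightEmbedding d)) ∈ triangulations (l + d) (r + d)
      ↔ T ∈ triangulations l r := by
  simp only [mem_triangulations, forall_mem_map, card_map, Function.Embedding.coe_prodMap,
    Prod.map_fst, Prod.map_snd, addRightEmbedding_apply, IsDiag, Crosses]
  refine and_congr (forall₂_congr fun p _ => by omega) (and_congr (by omega)
    (forall₂_congr fun p _ => forall₂_congr fun q _ => by omega))

lemma card_triangulations_add (l r d : ℕ) :
    (triangulations (l + d) (r + d)).card = (triangulations l r).card := by
  symm
  refine card_bij (fun T _ => T.map ((addRightEmbedding d).prodMap (addRightEmbedding d)))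
    (fun T hT => map_shift_mem_triangulations.mpr hT) (fun T _ T' _ h => map_inj.mp h) ?_
  intro T hT
  have hge : ∀ p ∈ T, d ≤ p.1 ∧ d ≤ p.2 := fun p hp => by
    have := (mem_triangulations.mp hT).1 p hp; unfold IsDiag at this; omega
  have hT' : (T.image fun p => (p.1 - d, p.2 - d)).map
      ((addRightEmbedding d).prodMap (addRightEmbedding d)) = T := by
    ext p
    simp only [mem_map, mem_image, Function.Embedding.coe_prodMap,
      Prod.map, addRightEmbedding_apply]
    constructor
    · rintro ⟨_, ⟨q, hq, rfl⟩, rfl⟩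
      have := hge q hq
      convert hq using 1
      ext <;> dsimp only <;> omega
    · intro hp
      have := hge p hp
      exact ⟨_, ⟨p, hp, rfl⟩, by ext <;> dsimp only <;> omega⟩
  exact ⟨_, map_shift_mem_triangulations.mp (hT' ▸ hT), hT'⟩

lemma card_triangulations_eq_card_one {l r : ℕ} (hlr : l ≤ r) :
    (triangulations l r).card = (triangulations 1 (r - l + 1)).card := by
  have h := card_triangulations_add 0 (r - l) l
  rw [zero_add, Nat.sub_add_cancel hlr] at h
  rw [h, ← card_triangulations_add 0 (r - l) 1]

theorem card_triangulations_one {m : ℕ} (hm : 2 ≤ m) :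
    (triangulations 1 m).card = catalan (m - 2) := by
  induction m using Nat.strong_induction_on with
  | _ m ih =>
  rcases Nat.eq_or_lt_of_le hm with rfl | hm
  · rw [triangulations_of_le (l := 1) (r := 2) (by norm_num), card_singleton, catalan_zero]
  have := card_filter_triangulations_eq_sum hm fun _ => True
  simp only [filter_true] at this
  rw [this, sum_Ico_eq_sum_range, show m - 2 = m - 3 + 1 by omega, catalan_succ,
    Fin.sum_univ_eq_sum_range (fun i => catalan i * catalan (m - 3 - i)), Nat.succ_eq_add_one,
    show m - 3 + 1 = m - 2 by omega]
  refine sum_congr rfl fun i hi => ?_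
  rw [mem_range] at hi
  rw [ih _ (by omega) (by omega), card_triangulations_eq_card_one (by omega),
    ih _ (by omega) (by omega)]
  congr 2 <;> omega

theorem card_triangulations {l r : ℕ} (hlr : l < r) :
    (triangulations l r).card = catalan (r - l - 1) := by
  rw [card_triangulations_eq_card_one hlr.le, card_triangulations_one (by omega),
    show r - l + 1 - 2 = r - l - 1 by omega]

/-- The ballot number `s (2k - s - 1)! / ((k - s)! k!)` for `s ≤ k`, extended by `0` for
`s > k` (where truncated subtraction would give junk) and by `1` at `k = s = 0`. -/
noncomputable def ballot (k s : ℕ) : ℚ :=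
  if k = 0 ∧ s = 0 then 1
  else if s ≤ k then s * (2 * k - s - 1).factorial / ((k - s).factorial * k.factorial)
  else 0

lemma ballot_zero_zero : ballot 0 0 = 1 := by simp [ballot]

lemma ballot_of_lt {k s : ℕ} (h : k < s) : ballot k s = 0 := by
  rw [ballot, if_neg (by omega), if_neg (by omega)]

lemma ballot_eq {k s : ℕ} (hk : 1 ≤ k) (h : s ≤ k) :
    ballot k s = s * (2 * k - s - 1).factorial / ((k - s).factorial * k.factorial) := by
  rw [ballot, if_neg (by omega), if_pos h]

lemma ballot_zero_right {k : ℕ} (hk : 1 ≤ k) : ballot k 0 = 0 := by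
  simp [ballot_eq hk]

lemma ballot_self (k : ℕ) : ballot k k = 1 := by
  rcases k with _ | k
  · exact ballot_zero_zero
  rw [ballot_eq (by omega) le_rfl, show 2 * (k + 1) - (k + 1) - 1 = k by omega, Nat.sub_self,
    Nat.factorial_zero, Nat.factorial_succ]
  have := k.factorial_pos
  push_cast
  field_simp

lemma factorial_succ_cast (m : ℕ) : ((m + 1).factorial : ℚ) = (m + 1) * m.factorial := by
  push_cast [Nat.factorial_succ]
  rfl

lemma ballot_succ_succ (k s : ℕ) :
    ballot (k + 1) (s + 1) = ballot (k + 1) (s + 2) + ballot k s := by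
  rcases lt_trichotomy s k with h | rfl | h
  · obtain ⟨m, rfl⟩ : ∃ m, k = s + m + 1 := ⟨k - s - 1, by omega⟩
    rw [ballot_eq (by omega) (by omega), ballot_eq (by omega) (by omega),
      ballot_eq (by omega) (by omega),
      show 2 * (s + m + 1 + 1) - (s + 1) - 1 = s + 2 * m + 1 + 1 by omega,
      show s + m + 1 + 1 - (s + 1) = m + 1 by omega,
      show 2 * (s + m + 1 + 1) - (s + 2) - 1 = s + 2 * m + 1 by omega,
      show s + m + 1 + 1 - (s + 2) = m by omega,
      show 2 * (s + m + 1) - s - 1 = s + 2 * m + 1 by omega,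
      show s + m + 1 - s = m + 1 by omega, factorial_succ_cast (s + 2 * m + 1),
      factorial_succ_cast m, factorial_succ_cast (s + m + 1)]
    have := m.factorial_pos
    have := (s + m + 1).factorial_pos
    have := (s + 2 * m + 1).factorial_pos
    field_simp
    push_cast
    ring
  · rw [ballot_self, ballot_self, ballot_of_lt (by omega), zero_add]
  · rw [ballot_of_lt (by omega), ballot_of_lt (by omega), ballot_of_lt h, add_zero]

lemma ballot_succ_one (k : ℕ) : ballot (k + 1) 1 = catalan k := by
  have h := congrArg (Nat.cast (R := ℚ)) (succ_mul_catalan_eq_centralBinom k)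
  rw [Nat.centralBinom_eq_two_mul_choose, Nat.cast_choose ℚ (by omega),
    show 2 * k - k = k by omega] at h
  rw [ballot_eq (by omega) (by omega), show 2 * (k + 1) - 1 - 1 = 2 * k by omega,
    show k + 1 - 1 = k by omega, factorial_succ_cast]
  have := k.factorial_pos
  push_cast at h ⊢
  rw [eq_div_iff (by positivity)] at h
  rw [div_eq_iff (by positivity), ← h]
  ring

theorem sum_ballot_mul_catalan (k s : ℕ) :
    ∑ i ∈ range k, ballot i s * catalan (k - 1 - i) = ballot k (s + 1) := by
  induction k generalizing s with
  | zero => simp [ballot_of_lt]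
  | succ k ih =>
  suffices ∀ d s, k + 1 - s = d →
      ∑ i ∈ range (k + 1), ballot i s * catalan (k - i) = ballot (k + 1) (s + 1) by
    simpa using this _ s rfl
  -- downward induction on `s`: the case `s + 1` follows from `s + 2` by `ballot_succ_succ`
  intro d
  induction d with
  | zero =>
    intro s hs
    rw [ballot_of_lt (by omega)]
    exact sum_eq_zero fun i hi => by rw [ballot_of_lt (by rw [mem_range] at hi; omega), zero_mul]
  | succ d ihd =>
    rintro (_ | t) hs
    · rw [sum_range_succ', sum_eq_zero fun i _ => by rw [ballot_zero_right (by omega), zero_mul],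
        ballot_zero_zero, ballot_succ_one, Nat.sub_zero, one_mul, zero_add]
    · have hshift := ihd (t + 2) (by omega)
      rw [sum_range_succ', ballot_of_lt (show 0 < t + 2 by omega), zero_mul, add_zero] at hshift
      rw [sum_range_succ', ballot_of_lt (show 0 < t + 1 by omega), zero_mul, add_zero]
      calc ∑ i ∈ range k, ballot (i + 1) (t + 1) * catalan (k - (i + 1))
          = ∑ i ∈ range k, (ballot (i + 1) (t + 2) * catalan (k - (i + 1)) +
              ballot i t * catalan (k - 1 - i)) := by
            refine sum_congr rfl fun i _ => ?_
            rw [ballot_succ_succ, show k - (i + 1) = k - 1 - i by omega]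
            ring
        _ = ballot (k + 1) (t + 1 + 1) := by
            rw [sum_add_distrib, hshift, ih, ← ballot_succ_succ]

lemma degOne_two_empty : degOne 2 ∅ = 0 := by
  rw [degOne, card_eq_zero, filter_eq_empty_iff]
  intro t ht
  obtain ⟨hc, hab, hbc, sab, -, -⟩ := mem_triangles.mp ht
  rcases sab with (⟨h, -, -⟩ | ⟨h, -⟩) | h
  · omega
  · omega
  · exact absurd h (notMem_empty _)

theorem card_filter_degOne_eq_ballot {m : ℕ} (hm : 2 ≤ m) (s : ℕ) :
    (((triangulations 1 m).filter fun T => degOne m T = s).card : ℚ) = ballot (m - 2) s := by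
  induction m using Nat.strong_induction_on generalizing s with
  | _ m ih =>
  rcases Nat.eq_or_lt_of_le hm with rfl | hm
  · rw [triangulations_of_le (l := 1) (r := 2) (by norm_num), filter_singleton, degOne_two_empty]
    rcases s with _ | s
    · simp [ballot_zero_zero]
    · simp [ballot_of_lt]
  rw [card_filter_triangulations_eq_sum hm (· = s)]
  rcases s with _ | t
  · simp [ballot_zero_right (show 1 ≤ m - 2 by omega)]
  push_cast
  rw [sum_Ico_eq_sum_range, ← sum_ballot_mul_catalan]
  refine sum_congr rfl fun i hi => ?_
  rw [mem_range] at hi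
  rw [ih _ (by omega) (by omega), card_triangulations (by omega), show 2 + i - 2 = i by omega,
    show m - (2 + i) - 1 = m - 2 - 1 - i by omega]

theorem degree_distribution_general (n s : ℕ) (hn : 4 ≤ n) (hs2 : s ≤ n - 2) :
    (((triangulations 1 n).filter fun T => degOne n T = s).card : ℚ) =
      (s : ℚ) * ((2 * n - s - 5).factorial : ℚ) /
        (((n - s - 2).factorial : ℚ) * ((n - 2).factorial : ℚ)) := by
  rw [card_filter_degOne_eq_ballot (by omega), ballot_eq (by omega) hs2,
    show 2 * (n - 2) - s - 1 = 2 * n - s - 5 by omega, show n - 2 - s = n - s - 2 by omega]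

/-- the distribution of the number of triangles at vertex `1`
(Lemma 5(1)). -/
theorem degree_distribution (n s : ℕ) (hn : 4 ≤ n) (hs1 : 1 ≤ s) (hs2 : s ≤ n - 2) :
    (((triangulations 1 n).filter fun T => degOne n T = s).card : ℚ) =
      (s : ℚ) * ((2 * n - s - 5).factorial : ℚ) /
        (((n - s - 2).factorial : ℚ) * ((n - 2).factorial : ℚ)) :=
  degree_distribution_general n s hn hs2
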